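/- arXiv:nlin/0203029 — 11 statements merged into one kernel-verified Lean document; each statement's English description precedes it below -/
import Mathlib

section
/- The push-forward φ of the KNY translation on the Picard lattice is a Cremona-type isometry: φ is a ℤ-module automorphism of L, and ⟨φ(x), φ(y)⟩ = ⟨x, y⟩ for all x, y ∈ L. -/
open scoped BigOperators

/-- The Picard lattice of the blown-up surface: free ℤ-module with basis
`H₀,H₁,E₁,…,E₈`, realized as coordinates `0,1,2,…,9` of `Fin 10 → ℤ`. -/
abbrev L : Type := Fin 10 → ℤ

def H0 : L := Pi.single 0 1
def H1 : L := Pi.single 1 1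
def E1 : L := Pi.single 2 1
def E2 : L := Pi.single 3 1
def E3 : L := Pi.single 4 1
def E4 : L := Pi.single 5 1
def E5 : L := Pi.single 6 1
def E6 : L := Pi.single 7 1
def E7 : L := Pi.single 8 1
def E8 : L := Pi.single 9 1

/-- The intersection form: `⟨H₀,H₁⟩ = 1`, `⟨H_i,H_i⟩ = 0`, `⟨E_k,E_l⟩ = -δ_{kl}`,
`⟨H_i,E_k⟩ = 0`. -/
def ip (x y : L) : ℤ :=
  x 0 * y 1 + x 1 * y 0 - x 2 * y 2 - x 3 * y 3 - x 4 * y 4 - x 5 * y 5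
    - x 6 * y 6 - x 7 * y 7 - x 8 * y 8 - x 9 * y 9

lemma ip_add_left (x y v : L) : ip (x + y) v = ip x v + ip y v := by
  simp only [ip, Pi.add_apply]; ring

lemma ip_smul_left (c : ℤ) (x v : L) : ip (c • x) v = c * ip x v := by
  simp only [ip, Pi.smul_apply, smul_eq_mul]; ring

/-- The reflection `x ↦ x + ⟨x,v⟩ v` associated to a vector `v` with `⟨v,v⟩ = -2`. -/
def reflV (v : L) : L →ₗ[ℤ] L where
  toFun x := x + ip x v • v
  map_add' x y := by
    show x + y + ip (x + y) v • v = (x + ip x v • v) + (y + ip y v • v)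
    rw [ip_add_left, add_smul]; abel
  map_smul' c x := by
    show c • x + ip (c • x) v • v = c • (x + ip x v • v)
    rw [ip_smul_left, mul_smul, smul_add]

-- simple roots
def al0 : L := E5 - E6
def al1 : L := E1 - E2
def al2 : L := H1 - E1 - E5
def al3 : L := H0 - E3 - E7
def al4 : L := E3 - E4
def al5 : L := E7 - E8

/-- The root lattice `Q = ℤα₀ + ⋯ + ℤα₅`. -/
def Q : Submodule ℤ L := Submodule.span ℤ {al0, al1, al2, al3, al4, al5}

-- the simple reflections w_i
def w0 : L →ₗ[ℤ] L := reflV al0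
def w1 : L →ₗ[ℤ] L := reflV al1
def w2 : L →ₗ[ℤ] L := reflV al2
def w3 : L →ₗ[ℤ] L := reflV al3
def w4 : L →ₗ[ℤ] L := reflV al4
def w5 : L →ₗ[ℤ] L := reflV al5

/-- `σ₁₀`: exchanges `E₁↔E₅`, `E₂↔E₆`. -/
def sig10 : L →ₗ[ℤ] L := LinearMap.funLeft ℤ ℤ ![0, 1, 6, 7, 4, 5, 2, 3, 8, 9]

/-- `σ₅₄₃₂₁₀`: exchanges `H₀↔H₁`, `E₁↔E₃`, `E₂↔E₄`, `E₅↔E₇`, `E₆↔E₈`. -/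
def sig543210 : L →ₗ[ℤ] L := LinearMap.funLeft ℤ ℤ ![1, 0, 4, 5, 2, 3, 8, 9, 6, 7]

/-- `σ₅₄ = σ₅₄₃₂₁₀ ∘ σ₁₀ ∘ σ₅₄₃₂₁₀`: exchanges `E₃↔E₇`, `E₄↔E₈`. -/
def sig54 : L →ₗ[ℤ] L := sig543210 ∘ₗ sig10 ∘ₗ sig543210

-- components of the anticanonical divisor
def D0 : L := H0 - E1 - E2
def D1 : L := H1 - E3 - E4
def D2 : L := H0 - E5 - E6
def D3 : L := H1 - E7 - E8

/-- The anticanonical class `δ = -K_X = 2H₀+2H₁-E₁-⋯-E₈`. -/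
def delta : L := 2 • H0 + 2 • H1 - E1 - E2 - E3 - E4 - E5 - E6 - E7 - E8

/-- `K' = α₀+α₁+2α₂+2α₃+α₄+α₅`, the canonical central element. -/
def Kp : L := al0 + al1 + 2 • al2 + 2 • al3 + al4 + al5

-- β and γ roots
def b0 : L := al3 + al5
def b1 : L := al1 + al2
def b2 : L := al3 + al4
def b3 : L := al0 + al2
def g0 : L := al0 + al1 + al2 + al3
def g1 : L := al2 + al3 + al4 + al5

/-- The sublattice `Q_B ⊆ Q` of elements `∑ aᵢαᵢ` with `a₀+a₁-a₂-a₃+a₄+a₅ = 0`. -/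
def QB : Set L :=
  {x | ∃ a₀ a₁ a₂ a₃ a₄ a₅ : ℤ,
    x = a₀ • al0 + a₁ • al1 + a₂ • al2 + a₃ • al3 + a₄ • al4 + a₅ • al5 ∧
    a₀ + a₁ - a₂ - a₃ + a₄ + a₅ = 0}

/-!
Written in the standard basis, `φ` is the matrix `M` whose columns are the prescribed images of
`H₀, H₁, E₁, …, E₈`. Preservation of the intersection form is the matrix identity `Mᵀ G M = G` for
the Gram matrix `G`, a finite computation. Since `G² = 1`, the lattice is unimodular, and the same
identity exhibits `G⁻¹ Mᵀ G` as a left inverse of `M`; hence `φ` is an automorphism of `L`.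
-/

open Matrix

namespace Matrix

variable {n R : Type*} [Fintype n] [CommRing R]

theorem dotProduct_mulVec_mulVec_of_transpose_mul_mul_eq {G M : Matrix n n R}
    (h : Mᵀ * G * M = G) (x y : n → R) :
    (M *ᵥ x) ⬝ᵥ G *ᵥ (M *ᵥ y) = x ⬝ᵥ G *ᵥ y := by
  conv_rhs => rw [← h]
  rw [← mulVec_mulVec, ← mulVec_mulVec, dotProduct_mulVec x, vecMul_transpose]

theorem isUnit_of_transpose_mul_mul_eq [DecidableEq n] {G M : Matrix n n R}
    (hG : IsUnit G.det) (h : Mᵀ * G * M = G) : IsUnit M := by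
  have : (G⁻¹ * Mᵀ * G) * M = 1 := by
    rw [Matrix.mul_assoc, Matrix.mul_assoc, ← Matrix.mul_assoc Mᵀ, h, nonsing_inv_mul G hG]
  exact (isUnit_iff_isUnit_det M).2 (isUnit_det_of_left_inverse this)

end Matrix

def ipGram : Matrix (Fin 10) (Fin 10) ℤ :=
  Matrix.of fun i j => ip (Pi.single i 1) (Pi.single j 1)

theorem ip_eq_dotProduct_ipGram (x y : L) : ip x y = x ⬝ᵥ ipGram *ᵥ y := by
  simp only [ip, ipGram, dotProduct, mulVec, of_apply, Fin.sum_univ_succ, Fin.sum_univ_zero,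
    Pi.single_apply, Fin.isValue, Fin.reduceSucc, Fin.reduceEq, if_true, if_false]
  ring

theorem isUnit_det_ipGram : IsUnit ipGram.det :=
  isUnit_det_of_left_inverse (B := ipGram) (by decide)

def knyMatrix : Matrix (Fin 10) (Fin 10) ℤ :=
  (Matrix.of ![2 • H0 + H1 - E2 - E4 - E6 - E8, H0 + 2 • H1 - E2 - E4 - E6 - E8,
    H0 + H1 - E2 - E4 - E8, E5, H0 + H1 - E2 - E4 - E6, E7,
    H0 + H1 - E4 - E6 - E8, E1, H0 + H1 - E2 - E6 - E8, E3])ᵀ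

theorem transpose_knyMatrix_mul_ipGram_mul_knyMatrix :
    knyMatrixᵀ * ipGram * knyMatrix = ipGram := by
  decide

/-- The push-forward `φ` of the KNY translation on the Picard lattice is a
Cremona-type isometry: `φ` is a ℤ-module automorphism of `L` and preserves the
intersection form. -/
theorem stmt_0
    (φ : L →ₗ[ℤ] L)
    (hφH0 : φ H0 = 2 • H0 + H1 - E2 - E4 - E6 - E8)
    (hφH1 : φ H1 = H0 + 2 • H1 - E2 - E4 - E6 - E8)
    (hφE1 : φ E1 = H0 + H1 - E2 - E4 - E8)
    (hφE2 : φ E2 = E5)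
    (hφE3 : φ E3 = H0 + H1 - E2 - E4 - E6)
    (hφE4 : φ E4 = E7)
    (hφE5 : φ E5 = H0 + H1 - E4 - E6 - E8)
    (hφE6 : φ E6 = E1)
    (hφE7 : φ E7 = H0 + H1 - E2 - E6 - E8)
    (hφE8 : φ E8 = E3) :
    Function.Bijective φ ∧ ∀ x y : L, ip (φ x) (φ y) = ip x y := by
  obtain rfl : φ = toLin' knyMatrix := by
    refine (Pi.basisFun ℤ (Fin 10)).ext fun j => ?_
    rw [Pi.basisFun_apply, toLin'_apply, mulVec_single_one]
    fin_cases j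
    exacts [hφH0, hφH1, hφE1, hφE2, hφE3, hφE4, hφE5, hφE6, hφE7, hφE8]
  have hiso := transpose_knyMatrix_mul_ipGram_mul_knyMatrix
  have hunit := isUnit_of_transpose_mul_mul_eq isUnit_det_ipGram hiso
  refine ⟨⟨mulVec_injective_of_isUnit hunit, mulVec_surjective_iff_isUnit.2 hunit⟩, fun x y => ?_⟩
  simp only [ip_eq_dotProduct_ipGram, toLin'_apply]
  exact dotProduct_mulVec_mulVec_of_transpose_mul_mul_eq hiso x y
end

section
/- The map φ permutes the classes of the irreducible components of the anticanonical divisor and fixes the anticanonical class: φ(D₀)=D₂, φ(D₁)=D₃, φ(D₂)=D₀, φ(D₃)=D₁, and consequently φ(δ)=δ. -/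
open scoped BigOperators

lemma delta_eq_sum_components : delta = D0 + D1 + D2 + D3 := by
  simp only [delta, D0, D1, D2, D3, two_smul]
  abel

/-- `φ` permutes the classes of the irreducible components of the anticanonical
divisor and fixes the anticanonical class. -/
theorem stmt_1
    (φ : L →ₗ[ℤ] L)
    (hφH0 : φ H0 = 2 • H0 + H1 - E2 - E4 - E6 - E8)
    (hφH1 : φ H1 = H0 + 2 • H1 - E2 - E4 - E6 - E8)
    (hφE1 : φ E1 = H0 + H1 - E2 - E4 - E8)
    (hφE2 : φ E2 = E5)
    (hφE3 : φ E3 = H0 + H1 - E2 - E4 - E6)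
    (hφE4 : φ E4 = E7)
    (hφE5 : φ E5 = H0 + H1 - E4 - E6 - E8)
    (hφE6 : φ E6 = E1)
    (hφE7 : φ E7 = H0 + H1 - E2 - E6 - E8)
    (hφE8 : φ E8 = E3) :
    φ D0 = D2 ∧ φ D1 = D3 ∧ φ D2 = D0 ∧ φ D3 = D1 ∧ φ delta = delta := by
  have h0 : φ D0 = D2 := by
    rw [D0, map_sub, map_sub, hφH0, hφE1, hφE2, D2]; abel
  have h1 : φ D1 = D3 := by
    rw [D1, map_sub, map_sub, hφH1, hφE3, hφE4, D3]; abel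
  have h2 : φ D2 = D0 := by
    rw [D2, map_sub, map_sub, hφH0, hφE5, hφE6, D0]; abel
  have h3 : φ D3 = D1 := by
    rw [D3, map_sub, map_sub, hφH1, hφE7, hφE8, D1]; abel
  refine ⟨h0, h1, h2, h3, ?_⟩
  rw [delta_eq_sum_components, map_add, map_add, map_add, h0, h1, h2, h3]
  abel
end

section
/- The map φ preserves the root lattice Q and acts on the simple roots by φ(α₀)=α₀+α₂+α₃+α₄+α₅, φ(α₁)=α₁+α₂+α₃+α₄+α₅, φ(α₂)=−α₃−α₄−α₅, φ(α₃)=−α₀−α₁−α₂, φ(α₄)=α₀+α₁+α₂+α₃+α₄, φ(α₅)=α₀+α₁+α₂+α₃+α₅. -/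
open scoped BigOperators

/-! Substituting the images of the basis vectors, each formula for `φ αᵢ` becomes an identity in
the free abelian group on `H₀, H₁, E₁, …, E₈`, so it holds without looking at coordinates. Since
`φ` then sends every simple root into `Q`, it preserves their span `Q`. -/

lemma simpleRoots_mem_Q : al0 ∈ Q ∧ al1 ∈ Q ∧ al2 ∈ Q ∧ al3 ∈ Q ∧ al4 ∈ Q ∧ al5 ∈ Q := by
  simp only [Q, Submodule.mem_span_of_mem, Set.mem_insert_iff, Set.mem_singleton_iff, true_or,
    or_true, and_self]

/-- `φ` preserves the root lattice `Q` and acts on the simple roots as stated. -/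
theorem stmt_5
    (φ : L →ₗ[ℤ] L)
    (hφH0 : φ H0 = 2 • H0 + H1 - E2 - E4 - E6 - E8)
    (hφH1 : φ H1 = H0 + 2 • H1 - E2 - E4 - E6 - E8)
    (hφE1 : φ E1 = H0 + H1 - E2 - E4 - E8)
    (hφE2 : φ E2 = E5)
    (hφE3 : φ E3 = H0 + H1 - E2 - E4 - E6)
    (hφE4 : φ E4 = E7)
    (hφE5 : φ E5 = H0 + H1 - E4 - E6 - E8)
    (hφE6 : φ E6 = E1)
    (hφE7 : φ E7 = H0 + H1 - E2 - E6 - E8)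
    (hφE8 : φ E8 = E3) :
    (∀ x ∈ Q, φ x ∈ Q) ∧
    φ al0 = al0 + al2 + al3 + al4 + al5 ∧
    φ al1 = al1 + al2 + al3 + al4 + al5 ∧
    φ al2 = -al3 - al4 - al5 ∧
    φ al3 = -al0 - al1 - al2 ∧
    φ al4 = al0 + al1 + al2 + al3 + al4 ∧
    φ al5 = al0 + al1 + al2 + al3 + al5 := by
  have e0 : φ al0 = al0 + al2 + al3 + al4 + al5 := by
    simp only [al0, al2, al3, al4, al5, map_sub, hφE5, hφE6]; abel
  have e1 : φ al1 = al1 + al2 + al3 + al4 + al5 := by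
    simp only [al1, al2, al3, al4, al5, map_sub, hφE1, hφE2]; abel
  have e2 : φ al2 = -al3 - al4 - al5 := by
    simp only [al2, al3, al4, al5, map_sub, hφH1, hφE1, hφE5]; abel
  have e3 : φ al3 = -al0 - al1 - al2 := by
    simp only [al0, al1, al2, al3, map_sub, hφH0, hφE3, hφE7]; abel
  have e4 : φ al4 = al0 + al1 + al2 + al3 + al4 := by
    simp only [al0, al1, al2, al3, al4, map_sub, hφE3, hφE4]; abel
  have e5 : φ al5 = al0 + al1 + al2 + al3 + al5 := by
    simp only [al0, al1, al2, al3, al5, map_sub, hφE7, hφE8]; abel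
  refine ⟨fun x hx => ?_, e0, e1, e2, e3, e4, e5⟩
  obtain ⟨h0, h1, h2, h3, h4, h5⟩ := simpleRoots_mem_Q
  rw [Q] at hx
  refine (Submodule.span_le (p := Q.comap φ)).2 ?_ hx
  rintro v (rfl | rfl | rfl | rfl | rfl | rfl) <;>
    simp only [SetLike.mem_coe, Submodule.mem_comap, e0, e1, e2, e3, e4, e5] <;>
    repeat' first
      | assumption
      | apply Submodule.add_mem
      | apply Submodule.sub_mem
      | apply Submodule.neg_mem
end

section
/- The square of φ acts on the root basis as a translation by the canonical central element: φ²(α₀)=α₀+K', φ²(α₁)=α₁+K', φ²(α₂)=α₂−K', φ²(α₃)=α₃−K', φ²(α₄)=α₄+K', φ²(α₅)=α₅+K'. -/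
open scoped BigOperators

/-! φ is determined by its values on the basis, so it is enough to work with the explicit map
`phi`. It fixes the anticanonical class `K'` and sends each simple root to an explicit
element of the root lattice, e.g. `α₀ ↦ K' - α₁ - α₂ - α₃` and `α₂ ↦ -(α₃ + α₄ + α₅)`;
applying the formulas twice, the roots return to `αᵢ` while the `K'`-terms add up. -/

def phiImage : Fin 10 → L :=
  ![2 • H0 + H1 - E2 - E4 - E6 - E8, H0 + 2 • H1 - E2 - E4 - E6 - E8,
    H0 + H1 - E2 - E4 - E8, E5, H0 + H1 - E2 - E4 - E6, E7,
    H0 + H1 - E4 - E6 - E8, E1, H0 + H1 - E2 - E6 - E8, E3]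

noncomputable def phi : L →ₗ[ℤ] L := (Pi.basisFun ℤ (Fin 10)).constr ℤ phiImage

lemma phi_single (i : Fin 10) : phi (Pi.single i 1) = phiImage i := by
  rw [phi, ← Pi.basisFun_apply, Module.Basis.constr_basis]

lemma eq_phi (φ : L →ₗ[ℤ] L)
    (hφH0 : φ H0 = 2 • H0 + H1 - E2 - E4 - E6 - E8)
    (hφH1 : φ H1 = H0 + 2 • H1 - E2 - E4 - E6 - E8)
    (hφE1 : φ E1 = H0 + H1 - E2 - E4 - E8)
    (hφE2 : φ E2 = E5)
    (hφE3 : φ E3 = H0 + H1 - E2 - E4 - E6)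
    (hφE4 : φ E4 = E7)
    (hφE5 : φ E5 = H0 + H1 - E4 - E6 - E8)
    (hφE6 : φ E6 = E1)
    (hφE7 : φ E7 = H0 + H1 - E2 - E6 - E8)
    (hφE8 : φ E8 = E3) : φ = phi := by
  refine (Pi.basisFun ℤ (Fin 10)).ext fun i => ?_
  rw [Pi.basisFun_apply, phi_single]
  fin_cases i
  exacts [hφH0, hφH1, hφE1, hφE2, hφE3, hφE4, hφE5, hφE6, hφE7, hφE8]

lemma phi_H0 : phi H0 = 2 • H0 + H1 - E2 - E4 - E6 - E8 := phi_single 0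
lemma phi_H1 : phi H1 = H0 + 2 • H1 - E2 - E4 - E6 - E8 := phi_single 1
lemma phi_E1 : phi E1 = H0 + H1 - E2 - E4 - E8 := phi_single 2
lemma phi_E2 : phi E2 = E5 := phi_single 3
lemma phi_E3 : phi E3 = H0 + H1 - E2 - E4 - E6 := phi_single 4
lemma phi_E4 : phi E4 = E7 := phi_single 5
lemma phi_E5 : phi E5 = H0 + H1 - E4 - E6 - E8 := phi_single 6
lemma phi_E6 : phi E6 = E1 := phi_single 7
lemma phi_E7 : phi E7 = H0 + H1 - E2 - E6 - E8 := phi_single 8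
lemma phi_E8 : phi E8 = E3 := phi_single 9

lemma phi_Kp : phi Kp = Kp := by
  simp only [Kp, al0, al1, al2, al3, al4, al5, map_add, map_sub, map_nsmul,
    phi_H0, phi_H1, phi_E1, phi_E2, phi_E3, phi_E4, phi_E5, phi_E6, phi_E7, phi_E8]
  abel

lemma phi_al0 : phi al0 = Kp - al1 - al2 - al3 := by
  simp only [Kp, al0, al1, al2, al3, al4, al5, map_sub, phi_E5, phi_E6]
  abel

lemma phi_al1 : phi al1 = Kp - al0 - al2 - al3 := by
  simp only [Kp, al0, al1, al2, al3, al4, al5, map_sub, phi_E1, phi_E2]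
  abel

lemma phi_al2 : phi al2 = -(al3 + al4 + al5) := by
  simp only [al2, al3, al4, al5, map_sub, phi_H1, phi_E1, phi_E5]
  abel

lemma phi_al3 : phi al3 = -(al0 + al1 + al2) := by
  simp only [al0, al1, al2, al3, map_sub, phi_H0, phi_E3, phi_E7]
  abel

lemma phi_al4 : phi al4 = Kp - al2 - al3 - al5 := by
  simp only [Kp, al0, al1, al2, al3, al4, al5, map_sub, phi_E3, phi_E4]
  abel

lemma phi_al5 : phi al5 = Kp - al2 - al3 - al4 := by
  simp only [Kp, al0, al1, al2, al3, al4, al5, map_sub, phi_E7, phi_E8]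
  abel

/-- The square of `φ` acts on the root basis as a translation by the canonical
central element `K'`. -/
theorem stmt_6
    (φ : L →ₗ[ℤ] L)
    (hφH0 : φ H0 = 2 • H0 + H1 - E2 - E4 - E6 - E8)
    (hφH1 : φ H1 = H0 + 2 • H1 - E2 - E4 - E6 - E8)
    (hφE1 : φ E1 = H0 + H1 - E2 - E4 - E8)
    (hφE2 : φ E2 = E5)
    (hφE3 : φ E3 = H0 + H1 - E2 - E4 - E6)
    (hφE4 : φ E4 = E7)
    (hφE5 : φ E5 = H0 + H1 - E4 - E6 - E8)
    (hφE6 : φ E6 = E1)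
    (hφE7 : φ E7 = H0 + H1 - E2 - E6 - E8)
    (hφE8 : φ E8 = E3) :
    φ (φ al0) = al0 + Kp ∧ φ (φ al1) = al1 + Kp ∧
    φ (φ al2) = al2 - Kp ∧ φ (φ al3) = al3 - Kp ∧
    φ (φ al4) = al4 + Kp ∧ φ (φ al5) = al5 + Kp := by
  obtain rfl := eq_phi φ hφH0 hφH1 hφE1 hφE2 hφE3 hφE4 hφE5 hφE6 hφE7 hφE8
  refine ⟨?_, ?_, ?_, ?_, ?_, ?_⟩ <;>
  · simp only [map_sub, map_add, map_neg, phi_Kp,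
      phi_al0, phi_al1, phi_al2, phi_al3, phi_al4, phi_al5]
    simp only [Kp]
    abel
end

section
/- The map φ is expressed in terms of the generators of the extended affine Weyl group W̃(D₅^{(1)}): φ = σ₅₄ ∘ σ₁₀ ∘ w₅ ∘ w₄ ∘ w₁ ∘ w₀ ∘ w₂ ∘ w₃ ∘ w₂ as ℤ-linear maps L → L. -/
open scoped BigOperators

/-- `φ` is expressed in terms of the generators of the extended affine Weyl
group `W̃(D₅⁽¹⁾)`: `φ = σ₅₄ ∘ σ₁₀ ∘ w₅ ∘ w₄ ∘ w₁ ∘ w₀ ∘ w₂ ∘ w₃ ∘ w₂`. -/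
theorem stmt_7
    (φ : L →ₗ[ℤ] L)
    (hφH0 : φ H0 = 2 • H0 + H1 - E2 - E4 - E6 - E8)
    (hφH1 : φ H1 = H0 + 2 • H1 - E2 - E4 - E6 - E8)
    (hφE1 : φ E1 = H0 + H1 - E2 - E4 - E8)
    (hφE2 : φ E2 = E5)
    (hφE3 : φ E3 = H0 + H1 - E2 - E4 - E6)
    (hφE4 : φ E4 = E7)
    (hφE5 : φ E5 = H0 + H1 - E4 - E6 - E8)
    (hφE6 : φ E6 = E1)
    (hφE7 : φ E7 = H0 + H1 - E2 - E6 - E8)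
    (hφE8 : φ E8 = E3) :
    φ = sig54 ∘ₗ sig10 ∘ₗ w5 ∘ₗ w4 ∘ₗ w1 ∘ₗ w0 ∘ₗ w2 ∘ₗ w3 ∘ₗ w2 := by
  apply (Pi.basisFun ℤ (Fin 10)).ext
  intro i
  have hsingle : ∀ i : Fin 10, (Pi.basisFun ℤ (Fin 10)) i = Pi.single i (1:ℤ) := by
    intro i; ext j; simp [Pi.basisFun_apply, Pi.single_apply, LinearMap.single_apply]
  rw [hsingle]
  fin_cases i
  · show φ H0 = _; rw [hφH0]; decide
  · show φ H1 = _; rw [hφH1]; decide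
  · show φ E1 = _; rw [hφE1]; decide
  · show φ E2 = _; rw [hφE2]; decide
  · show φ E3 = _; rw [hφE3]; decide
  · show φ E4 = _; rw [hφE4]; decide
  · show φ E5 = _; rw [hφE5]; decide
  · show φ E6 = _; rw [hφE6]; decide
  · show φ E7 = _; rw [hφE7]; decide
  · show φ E8 = _; rw [hφE8]; decide
end

section
/- The fixed sublattice of φ² in the root lattice Q is exactly Q_B: for integers a₀,…,a₅ and q = a₀α₀+a₁α₁+a₂α₂+a₃α₃+a₄α₄+a₅α₅, one has φ²(q) = q if and only if a₀+a₁−a₂−a₃+a₄+a₅ = 0. -/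
open scoped BigOperators

/-!
On the simple roots `φ` acts by an integer matrix: with `s = α₀+α₁+α₂ = H₁-E₂-E₆` and
`t = α₃+α₄+α₅ = H₀-E₄-E₈` one finds `φ α₀ = α₀+α₂+t`, `φ α₁ = α₁+α₂+t`, `φ α₂ = -t`,
`φ α₃ = -s`, `φ α₄ = s+α₃+α₄`, `φ α₅ = s+α₃+α₅`. Since the anticanonical class is
`δ = s+t+α₂+α₃ = K'`, squaring gives `φ² αᵢ = αᵢ ± δ` with sign `-` exactly for `i = 2, 3`.
Hence `φ²(∑ aᵢαᵢ) = ∑ aᵢαᵢ + (a₀+a₁-a₂-a₃+a₄+a₅) δ`, and `δ ≠ 0` in the free module `L`.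
-/

theorem delta_eq_Kp : delta = Kp := by
  simp only [delta, Kp, al0, al1, al2, al3, al4, al5]
  module

theorem delta_ne_zero : delta ≠ 0 := by
  intro h
  have h0 := congrFun h 0
  simp [delta, H0, H1, E1, E2, E3, E4, E5, E6, E7, E8] at h0

theorem map_map_root_combination (φ : L →ₗ[ℤ] L)
    (h₀ : φ al0 = al0 + al2 + al3 + al4 + al5) (h₁ : φ al1 = al1 + al2 + al3 + al4 + al5)
    (h₂ : φ al2 = -(al3 + al4 + al5)) (h₃ : φ al3 = -(al0 + al1 + al2))
    (h₄ : φ al4 = al0 + al1 + al2 + al3 + al4) (h₅ : φ al5 = al0 + al1 + al2 + al3 + al5)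
    (a₀ a₁ a₂ a₃ a₄ a₅ : ℤ) :
    φ (φ (a₀ • al0 + a₁ • al1 + a₂ • al2 + a₃ • al3 + a₄ • al4 + a₅ • al5)) =
      a₀ • al0 + a₁ • al1 + a₂ • al2 + a₃ • al3 + a₄ • al4 + a₅ • al5 +
        (a₀ + a₁ - a₂ - a₃ + a₄ + a₅) • delta := by
  simp only [map_add, map_smul, map_neg, h₀, h₁, h₂, h₃, h₄, h₅, delta_eq_Kp, Kp]
  module

/-- The fixed sublattice of `φ²` in `Q` is exactly `Q_B`: `φ²` fixes
`∑ aᵢαᵢ` iff `a₀+a₁-a₂-a₃+a₄+a₅ = 0`. -/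
theorem stmt_8
    (φ : L →ₗ[ℤ] L)
    (hφH0 : φ H0 = 2 • H0 + H1 - E2 - E4 - E6 - E8)
    (hφH1 : φ H1 = H0 + 2 • H1 - E2 - E4 - E6 - E8)
    (hφE1 : φ E1 = H0 + H1 - E2 - E4 - E8)
    (hφE2 : φ E2 = E5)
    (hφE3 : φ E3 = H0 + H1 - E2 - E4 - E6)
    (hφE4 : φ E4 = E7)
    (hφE5 : φ E5 = H0 + H1 - E4 - E6 - E8)
    (hφE6 : φ E6 = E1)
    (hφE7 : φ E7 = H0 + H1 - E2 - E6 - E8)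
    (hφE8 : φ E8 = E3)
    (a₀ a₁ a₂ a₃ a₄ a₅ : ℤ) :
    φ (φ (a₀ • al0 + a₁ • al1 + a₂ • al2 + a₃ • al3 + a₄ • al4 + a₅ • al5)) =
        a₀ • al0 + a₁ • al1 + a₂ • al2 + a₃ • al3 + a₄ • al4 + a₅ • al5 ↔
      a₀ + a₁ - a₂ - a₃ + a₄ + a₅ = 0 := by
  have h₀ : φ al0 = al0 + al2 + al3 + al4 + al5 := by
    simp only [al0, al2, al3, al4, al5, map_sub, hφE5, hφE6]; module
  have h₁ : φ al1 = al1 + al2 + al3 + al4 + al5 := by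
    simp only [al1, al2, al3, al4, al5, map_sub, hφE1, hφE2]; module
  have h₂ : φ al2 = -(al3 + al4 + al5) := by
    simp only [al2, al3, al4, al5, map_sub, hφH1, hφE1, hφE5]; module
  have h₃ : φ al3 = -(al0 + al1 + al2) := by
    simp only [al0, al1, al2, al3, map_sub, hφH0, hφE3, hφE7]; module
  have h₄ : φ al4 = al0 + al1 + al2 + al3 + al4 := by
    simp only [al0, al1, al2, al3, al4, map_sub, hφE3, hφE4]; module
  have h₅ : φ al5 = al0 + al1 + al2 + al3 + al5 := by
    simp only [al0, al1, al2, al3, al5, map_sub, hφE7, hφE8]; module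
  rw [map_map_root_combination φ h₀ h₁ h₂ h₃ h₄ h₅, add_eq_left, smul_eq_zero,
    or_iff_left delta_ne_zero]
end

section
/- The six vectors α₀, β₀, β₁, β₂, β₃, γ₀ form a ℤ-basis of the root lattice Q: every element of Q is a unique integer linear combination of α₀, β₀, β₁, β₂, β₃, γ₀. -/
open scoped BigOperators

/-!
Solving the defining relations for the simple roots gives `α₂ = β₃ - α₀`,
`α₁ = α₀ + β₁ - β₃`, `α₃ = γ₀ - α₀ - β₁`, `α₄ = β₂ - α₃`, `α₅ = β₀ - α₃`, so
`α₀, β₀, β₁, β₂, β₃, γ₀` span `Q` over `ℤ`. They are linearly independent because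
their coordinates at `E₅, E₈, E₂, E₄, E₁, H₀` form a matrix of determinant `1`.
-/

theorem existsUnique_eq_sum_smul_of_mem_span {ι R M : Type*} [Fintype ι] [Semiring R]
    [AddCommMonoid M] [Module R M] {v : ι → M} (hv : LinearIndependent R v) {x : M}
    (hx : x ∈ Submodule.span R (Set.range v)) : ∃! c : ι → R, x = ∑ i, c i • v i := by
  obtain ⟨c, rfl⟩ := (Submodule.mem_span_range_iff_exists_fun R).mp hx
  exact ⟨c, rfl, fun d hd => hv.fintypeLinearCombination_injective <| by
    simpa only [Fintype.linearCombination_apply] using hd.symm⟩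

def alphaBetaGamma : Fin 6 → L := ![al0, b0, b1, b2, b3, g0]

theorem range_alphaBetaGamma : Set.range alphaBetaGamma = {al0, b0, b1, b2, b3, g0} := by
  simp only [alphaBetaGamma, Matrix.range_cons, Matrix.range_empty, Set.singleton_union,
    Set.union_empty]

theorem span_alphaBetaGamma : Submodule.span ℤ (Set.range alphaBetaGamma) = Q := by
  rw [range_alphaBetaGamma, Q]
  apply Submodule.span_eq_span
  · simp only [Set.insert_subset_iff, Set.singleton_subset_iff, b0, b1, b2, b3, g0]
    simp (maxDischargeDepth := 4) [Submodule.add_mem, Submodule.mem_span_of_mem]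
  · have hα₁ : al1 = al0 + b1 - b3 := by simp only [b1, b3]; abel
    have hα₂ : al2 = b3 - al0 := by simp only [b3]; abel
    have hα₃ : al3 = g0 - al0 - b1 := by simp only [g0, b1]; abel
    have hα₄ : al4 = b2 - g0 + al0 + b1 := by simp only [b2, g0, b1]; abel
    have hα₅ : al5 = b0 - g0 + al0 + b1 := by simp only [b0, g0, b1]; abel
    simp only [Set.insert_subset_iff, Set.singleton_subset_iff]
    rw [hα₁, hα₂, hα₃, hα₄, hα₅]
    simp (maxDischargeDepth := 4)
      [Submodule.add_mem, Submodule.sub_mem, Submodule.mem_span_of_mem]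

theorem linearIndependent_alphaBetaGamma : LinearIndependent ℤ alphaBetaGamma := by
  let A : Matrix (Fin 6) (Fin 6) ℤ :=
    !![1, 0, 0, 0, 0, 0;
       0, -1, 0, 0, 0, 1;
       -1, 0, -1, 0, 0, 0;
       0, 0, 0, -1, 0, 1;
       0, 0, 0, 0, -1, 0;
       0, 0, -1, 0, 0, 1]
  have hA : LinearMap.funLeft ℤ ℤ ![6, 9, 3, 5, 2, 0] ∘ alphaBetaGamma = fun i => A i := by
    funext i j
    fin_cases i <;> fin_cases j <;> rfl
  refine .of_comp _ (hA ▸ Matrix.linearIndependent_rows_of_det_ne_zero ?_)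
  simp [A, Matrix.det_succ_row_zero, Fin.sum_univ_succ]

/-- `α₀, β₀, β₁, β₂, β₃, γ₀` form a ℤ-basis of the root lattice `Q`: every
element of `Q` is a unique integer linear combination of them. -/
theorem stmt_13 :
    ∀ x ∈ Q, ∃! c : Fin 6 → ℤ,
      x = c 0 • al0 + c 1 • b0 + c 2 • b1 + c 3 • b2 + c 4 • b3 + c 5 • g0 := by
  intro x hx
  rw [← span_alphaBetaGamma] at hx
  simpa [Fin.sum_univ_six, alphaBetaGamma] using
    existsUnique_eq_sum_smul_of_mem_span linearIndependent_alphaBetaGamma hx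
end

section
/- If x ∈ Q satisfies ⟨x,β_i⟩ = ⟨α₀,β_i⟩ for i = 0,1,2,3, ⟨x,γ₀⟩ = ⟨α₀,γ₀⟩, and ⟨x,x⟩ = −2, then there exists an integer z such that x = α₀ + zK' or x = α₀ + α₂ + α₃ + zK'. -/
/-!
Shifting by `α₀`, the linear conditions say that `x - α₀` is orthogonal to `β₀, β₁, β₂, β₃, γ₀`.
In the coordinates of `Q` with respect to the simple roots, these are five linear equations whose
solutions are `ℤK' + ℤ(α₂ + α₃)`. Since `K'` lies in the radical of the form on `Q`, writing
`x = α₀ + t(α₂ + α₃) + zK'` gives `⟨x, x⟩ = -2 + 2t(1 - t)`, so `t = 0` or `t = 1`.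
-/

open scoped BigOperators

lemma ip_comm (x y : L) : ip x y = ip y x := by
  unfold ip; ring

lemma ip_add_right (v x y : L) : ip v (x + y) = ip v x + ip v y := by
  rw [ip_comm, ip_add_left, ip_comm x, ip_comm y]

lemma ip_smul_right (c : ℤ) (v x : L) : ip v (c • x) = c * ip v x := by
  rw [ip_comm, ip_smul_left, ip_comm]

lemma ip_sub_left (x y v : L) : ip (x - y) v = ip x v - ip y v := by
  simp only [ip, Pi.sub_apply]; ring

lemma mem_Q_iff {x : L} : x ∈ Q ↔ ∃ a₀ a₁ a₂ a₃ a₄ a₅ : ℤ,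
    x = a₀ • al0 + a₁ • al1 + a₂ • al2 + a₃ • al3 + a₄ • al4 + a₅ • al5 := by
  constructor
  · intro hx
    obtain ⟨a₀, y₁, hy₁, rfl⟩ := Submodule.mem_span_insert.mp hx
    obtain ⟨a₁, y₂, hy₂, rfl⟩ := Submodule.mem_span_insert.mp hy₁
    obtain ⟨a₂, y₃, hy₃, rfl⟩ := Submodule.mem_span_insert.mp hy₂
    obtain ⟨a₃, y₄, hy₄, rfl⟩ := Submodule.mem_span_insert.mp hy₃
    obtain ⟨a₄, y₅, hy₅, rfl⟩ := Submodule.mem_span_insert.mp hy₄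
    obtain ⟨a₅, rfl⟩ := Submodule.mem_span_singleton.mp hy₅
    exact ⟨a₀, a₁, a₂, a₃, a₄, a₅, by abel⟩
  · rintro ⟨a₀, a₁, a₂, a₃, a₄, a₅, rfl⟩
    have hal : ∀ v ∈ ({al0, al1, al2, al3, al4, al5} : Set L), v ∈ Q :=
      fun v hv => Submodule.subset_span hv
    simp only [Set.mem_insert_iff, Set.mem_singleton_iff, forall_eq_or_imp, forall_eq] at hal
    obtain ⟨h₀, h₁, h₂, h₃, h₄, h₅⟩ := hal
    exact Q.add_mem (Q.add_mem (Q.add_mem (Q.add_mem (Q.add_mem (Q.smul_mem a₀ h₀)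
      (Q.smul_mem a₁ h₁)) (Q.smul_mem a₂ h₂)) (Q.smul_mem a₃ h₃)) (Q.smul_mem a₄ h₄))
      (Q.smul_mem a₅ h₅)

/-- The Gram matrix of `α₀,…,α₅` is minus the Cartan matrix of type `D₅⁽¹⁾`. -/
lemma ip_al_of_eq_sum {a₀ a₁ a₂ a₃ a₄ a₅ : ℤ} {y : L}
    (hy : y = a₀ • al0 + a₁ • al1 + a₂ • al2 + a₃ • al3 + a₄ • al4 + a₅ • al5) :
    ip y al0 = a₂ - 2 * a₀ ∧ ip y al1 = a₂ - 2 * a₁ ∧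
      ip y al2 = a₀ + a₁ - 2 * a₂ + a₃ ∧ ip y al3 = a₂ - 2 * a₃ + a₄ + a₅ ∧
      ip y al4 = a₃ - 2 * a₄ ∧ ip y al5 = a₃ - 2 * a₅ := by
  subst hy
  refine ⟨?_, ?_, ?_, ?_, ?_, ?_⟩ <;>
    simp only [ip, al0, al1, al2, al3, al4, al5, H0, H1, E1, E2, E3, E4, E5, E6, E7, E8,
      Pi.add_apply, Pi.sub_apply, Pi.smul_apply, smul_eq_mul, Pi.single_apply, Fin.reduceEq,
      ↓reduceIte] <;> ring

lemma Kp_mem_Q : Kp ∈ Q :=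
  mem_Q_iff.2 ⟨1, 1, 2, 2, 1, 1, by simp only [Kp, two_nsmul]; module⟩

lemma ip_Kp_of_mem_Q {v : L} (hv : v ∈ Q) : ip v Kp = 0 := by
  obtain ⟨a₀, a₁, a₂, a₃, a₄, a₅, hv⟩ := mem_Q_iff.1 hv
  obtain ⟨h0, h1, h2, h3, h4, h5⟩ := ip_al_of_eq_sum hv
  simp only [Kp, two_nsmul, ip_add_right, h0, h1, h2, h3, h4, h5]
  ring

lemma ip_add_smul_Kp_self {v : L} (hv : v ∈ Q) (z : ℤ) :
    ip (v + z • Kp) (v + z • Kp) = ip v v := by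
  simp only [ip_add_left, ip_add_right, ip_smul_left, ip_smul_right, ip_Kp_of_mem_Q hv,
    ip_Kp_of_mem_Q Kp_mem_Q, ip_comm Kp v]
  ring

lemma eq_smul_Kp_add_smul_of_orthogonal {y : L} (hyQ : y ∈ Q)
    (h0 : ip y b0 = 0) (h1 : ip y b1 = 0) (h2 : ip y b2 = 0) (h3 : ip y b3 = 0)
    (hg : ip y g0 = 0) : ∃ z t : ℤ, y = z • Kp + t • (al2 + al3) := by
  obtain ⟨a₀, a₁, a₂, a₃, a₄, a₅, hy⟩ := mem_Q_iff.1 hyQ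
  obtain ⟨c₀, c₁, c₂, c₃, c₄, c₅⟩ := ip_al_of_eq_sum hy
  simp only [b0, b1, b2, b3, g0, ip_add_right, c₀, c₁, c₂, c₃, c₄, c₅] at h0 h1 h2 h3 hg
  obtain ⟨rfl, rfl, rfl, rfl⟩ : a₀ = a₁ ∧ a₂ = a₃ ∧ a₀ = a₄ ∧ a₀ = a₅ := by omega
  refine ⟨a₀, a₂ - 2 * a₀, ?_⟩
  rw [hy]
  simp only [Kp, two_nsmul]
  module

lemma ip_self_al0_add_smul (t : ℤ) :
    ip (al0 + t • (al2 + al3)) (al0 + t • (al2 + al3)) = -2 + 2 * t * (1 - t) := by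
  simp only [ip, al0, al2, al3, H0, H1, E1, E3, E5, E6, E7, Pi.add_apply, Pi.sub_apply,
    Pi.smul_apply, smul_eq_mul, Pi.single_apply, Fin.reduceEq, ↓reduceIte]
  ring

/-- If `x ∈ Q` has the same intersection numbers with `β₀,…,β₃,γ₀` as `α₀` and
`⟨x,x⟩ = -2`, then `x = α₀ + zK'` or `x = α₀+α₂+α₃+zK'` for some integer `z`. -/
theorem stmt_14 (x : L) (hx : x ∈ Q)
    (hb0 : ip x b0 = ip al0 b0) (hb1 : ip x b1 = ip al0 b1)
    (hb2 : ip x b2 = ip al0 b2) (hb3 : ip x b3 = ip al0 b3)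
    (hg0 : ip x g0 = ip al0 g0) (hxx : ip x x = -2) :
    ∃ z : ℤ, x = al0 + z • Kp ∨ x = al0 + al2 + al3 + z • Kp := by
  have hal0 : al0 ∈ Q := mem_Q_iff.2 ⟨1, 0, 0, 0, 0, 0, by module⟩
  obtain ⟨z, t, hsub⟩ := eq_smul_Kp_add_smul_of_orthogonal (Q.sub_mem hx hal0)
    (by rw [ip_sub_left, hb0, sub_self]) (by rw [ip_sub_left, hb1, sub_self])
    (by rw [ip_sub_left, hb2, sub_self]) (by rw [ip_sub_left, hb3, sub_self])
    (by rw [ip_sub_left, hg0, sub_self])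
  have hx_eq : x = al0 + t • (al2 + al3) + z • Kp := by
    rw [sub_eq_iff_eq_add'] at hsub; rw [hsub]; abel
  have ht : t * (1 - t) = 0 := by
    have hmem : al0 + t • (al2 + al3) ∈ Q := mem_Q_iff.2 ⟨1, 0, t, t, 0, 0, by module⟩
    rw [hx_eq, ip_add_smul_Kp_self hmem, ip_self_al0_add_smul] at hxx
    linarith
  refine ⟨z, ?_⟩
  rcases mul_eq_zero.mp ht with rfl | ht
  · left
    rw [hx_eq]
    simp
  · right
    rw [hx_eq, show t = 1 by omega]
    abel
end

section
/- Each of the six reflections w_{β₀}, w_{β₁}, w_{β₂}, w_{β₃}, w_{γ₀}, w_{γ₁} commutes with φ² as maps L → L. -/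
open scoped BigOperators

/-! Conjugating a reflection by an isometry `f` reflects in `f v`. Since `φ` is an isometry fixing
`β₀,…,β₃` and exchanging `γ₀ ↔ γ₁`, the map `φ²` is an isometry fixing all six roots, so it
commutes with their reflections. -/

open Matrix

lemma comp_reflV_eq_reflV_comp_of_isometry (f : L →ₗ[ℤ] L)
    (hf : ∀ x y, ip (f x) (f y) = ip x y) (v : L) :
    f ∘ₗ reflV v = reflV (f v) ∘ₗ f := by
  refine LinearMap.ext fun x => ?_
  change f (x + ip x v • v) = f x + ip (f x) (f v) • f v
  rw [hf, map_add, map_smul]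

lemma reflV_comp_eq_comp_reflV_of_isometry (f : L →ₗ[ℤ] L) (hf : ∀ x y, ip (f x) (f y) = ip x y)
    {v : L} (hv : f v = v) : reflV v ∘ₗ f = f ∘ₗ reflV v := by
  rw [comp_reflV_eq_reflV_comp_of_isometry f hf, hv]

def ipMatrix : Matrix (Fin 10) (Fin 10) ℤ :=
  of fun i j => ip (Pi.single i 1) (Pi.single j 1)

lemma ip_eq_dotProduct_mulVec (x y : L) : ip x y = x ⬝ᵥ (ipMatrix *ᵥ y) := by
  simp only [ip, dotProduct, mulVec, ipMatrix, of_apply, Fin.sum_univ_succ, Fin.sum_univ_zero,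
    Pi.single_apply, Fin.succ_zero_eq_one, Fin.succ_one_eq_two, Fin.reduceSucc, Fin.reduceEq,
    ↓reduceIte]
  ring

lemma ip_mulVec_mulVec {M : Matrix (Fin 10) (Fin 10) ℤ} (hM : Mᵀ * ipMatrix * M = ipMatrix)
    (x y : L) : ip (M *ᵥ x) (M *ᵥ y) = ip x y :=
  calc ip (M *ᵥ x) (M *ᵥ y) = x ⬝ᵥ (Mᵀ *ᵥ (ipMatrix *ᵥ (M *ᵥ y))) := by
        rw [ip_eq_dotProduct_mulVec, dotProduct_mulVec x, vecMul_transpose]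
    _ = ip x y := by rw [mulVec_mulVec, mulVec_mulVec, hM, ip_eq_dotProduct_mulVec]

/-- The matrix of `φ`: its columns are the images of `H₀, H₁, E₁, …, E₈`. -/
def phiM : Matrix (Fin 10) (Fin 10) ℤ :=
  !![2,1,1,0,1,0,1,0,1,0;
     1,2,1,0,1,0,1,0,1,0;
     0,0,0,0,0,0,0,1,0,0;
     -1,-1,-1,0,-1,0,0,0,-1,0;
     0,0,0,0,0,0,0,0,0,1;
     -1,-1,-1,0,-1,0,-1,0,0,0;
     0,0,0,1,0,0,0,0,0,0;
     -1,-1,0,0,-1,0,-1,0,-1,0;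
     0,0,0,0,0,1,0,0,0,0;
     -1,-1,-1,0,0,0,-1,0,-1,0]

lemma ip_phiM_mulVec (x y : L) : ip (phiM *ᵥ x) (phiM *ᵥ y) = ip x y :=
  ip_mulVec_mulVec (by decide) x y

lemma phiM_mulVec_b0 : phiM *ᵥ b0 = b0 := by decide
lemma phiM_mulVec_b1 : phiM *ᵥ b1 = b1 := by decide
lemma phiM_mulVec_b2 : phiM *ᵥ b2 = b2 := by decide
lemma phiM_mulVec_b3 : phiM *ᵥ b3 = b3 := by decide
lemma phiM_mulVec_g0 : phiM *ᵥ g0 = g1 := by decide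
lemma phiM_mulVec_g1 : phiM *ᵥ g1 = g0 := by decide

lemma eq_mulVecLin_phiM
    (φ : L →ₗ[ℤ] L)
    (hφH0 : φ H0 = 2 • H0 + H1 - E2 - E4 - E6 - E8)
    (hφH1 : φ H1 = H0 + 2 • H1 - E2 - E4 - E6 - E8)
    (hφE1 : φ E1 = H0 + H1 - E2 - E4 - E8)
    (hφE2 : φ E2 = E5)
    (hφE3 : φ E3 = H0 + H1 - E2 - E4 - E6)
    (hφE4 : φ E4 = E7)
    (hφE5 : φ E5 = H0 + H1 - E4 - E6 - E8)
    (hφE6 : φ E6 = E1)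
    (hφE7 : φ E7 = H0 + H1 - E2 - E6 - E8)
    (hφE8 : φ E8 = E3) : φ = phiM.mulVecLin := by
  refine (Pi.basisFun ℤ (Fin 10)).ext fun i => ?_
  fin_cases i <;> simp only [Pi.basisFun_apply]
  · refine hφH0.trans ?_; decide
  · refine hφH1.trans ?_; decide
  · refine hφE1.trans ?_; decide
  · refine hφE2.trans ?_; decide
  · refine hφE3.trans ?_; decide
  · refine hφE4.trans ?_; decide
  · refine hφE5.trans ?_; decide
  · refine hφE6.trans ?_; decide
  · refine hφE7.trans ?_; decide
  · refine hφE8.trans ?_; decide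

/-- Each of the reflections `w_{β₀},…,w_{β₃},w_{γ₀},w_{γ₁}` commutes with
`φ²` as maps `L → L`. -/
theorem stmt_15
    (φ : L →ₗ[ℤ] L)
    (hφH0 : φ H0 = 2 • H0 + H1 - E2 - E4 - E6 - E8)
    (hφH1 : φ H1 = H0 + 2 • H1 - E2 - E4 - E6 - E8)
    (hφE1 : φ E1 = H0 + H1 - E2 - E4 - E8)
    (hφE2 : φ E2 = E5)
    (hφE3 : φ E3 = H0 + H1 - E2 - E4 - E6)
    (hφE4 : φ E4 = E7)
    (hφE5 : φ E5 = H0 + H1 - E4 - E6 - E8)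
    (hφE6 : φ E6 = E1)
    (hφE7 : φ E7 = H0 + H1 - E2 - E6 - E8)
    (hφE8 : φ E8 = E3) :
    reflV b0 ∘ₗ (φ ∘ₗ φ) = (φ ∘ₗ φ) ∘ₗ reflV b0 ∧
    reflV b1 ∘ₗ (φ ∘ₗ φ) = (φ ∘ₗ φ) ∘ₗ reflV b1 ∧
    reflV b2 ∘ₗ (φ ∘ₗ φ) = (φ ∘ₗ φ) ∘ₗ reflV b2 ∧
    reflV b3 ∘ₗ (φ ∘ₗ φ) = (φ ∘ₗ φ) ∘ₗ reflV b3 ∧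
    reflV g0 ∘ₗ (φ ∘ₗ φ) = (φ ∘ₗ φ) ∘ₗ reflV g0 ∧
    reflV g1 ∘ₗ (φ ∘ₗ φ) = (φ ∘ₗ φ) ∘ₗ reflV g1 := by
  obtain rfl := eq_mulVecLin_phiM φ hφH0 hφH1 hφE1 hφE2 hφE3 hφE4 hφE5 hφE6 hφE7 hφE8
  have hiso (x y : L) :
      ip ((phiM.mulVecLin ∘ₗ phiM.mulVecLin) x) ((phiM.mulVecLin ∘ₗ phiM.mulVecLin) y) = ip x y := by
    simp only [LinearMap.comp_apply, mulVecLin_apply, ip_phiM_mulVec]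
  refine ⟨?_, ?_, ?_, ?_, ?_, ?_⟩ <;> refine reflV_comp_eq_comp_reflV_of_isometry _ hiso ?_ <;>
    simp only [LinearMap.comp_apply, mulVecLin_apply, phiM_mulVec_b0, phiM_mulVec_b1,
      phiM_mulVec_b2, phiM_mulVec_b3, phiM_mulVec_g0, phiM_mulVec_g1]
end

section
/- The square of the lattice action ψ of the q-Painlevé VI mapping acts on the root basis by ψ²(α₀)=α₀, ψ²(α₁)=α₁, ψ²(α₂)=α₂+K', ψ²(α₃)=α₃−K', ψ²(α₄)=α₄, ψ²(α₅)=α₅. -/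
open scoped BigOperators

/-- The lattice action of the `q`-Painlevé VI mapping:
`ψ = σ₁₀ ∘ σ₅₄₃₂₁₀ ∘ w₃ ∘ w₅ ∘ w₄ ∘ w₃`. -/
def psi : L →ₗ[ℤ] L := sig10 ∘ₗ sig543210 ∘ₗ w3 ∘ₗ w5 ∘ₗ w4 ∘ₗ w3

/-! ψ permutes `α₀, α₁, α₄, α₅` by the involution `α₀ ↔ α₅`, `α₁ ↔ α₄`, and sends
`α₂ ↦ α₀ + α₁ + 2α₂ + α₃`, `α₃ ↦ -(α₀ + α₁ + α₂)`; applying ψ once more and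
using linearity gives the action of ψ² on the root basis. -/

lemma psi_al0 : psi al0 = al5 := by funext i; fin_cases i <;> rfl

lemma psi_al1 : psi al1 = al4 := by funext i; fin_cases i <;> rfl

lemma psi_al2 : psi al2 = al0 + al1 + 2 • al2 + al3 := by funext i; fin_cases i <;> rfl

lemma psi_al3 : psi al3 = -(al0 + al1 + al2) := by funext i; fin_cases i <;> rfl

lemma psi_al4 : psi al4 = al1 := by funext i; fin_cases i <;> rfl

lemma psi_al5 : psi al5 = al0 := by funext i; fin_cases i <;> rfl

/-- The square of the lattice action `ψ` of the `q`-Painlevé VI mapping acts on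
the root basis as stated. -/
theorem stmt_17 :
    psi (psi al0) = al0 ∧ psi (psi al1) = al1 ∧
    psi (psi al2) = al2 + Kp ∧ psi (psi al3) = al3 - Kp ∧
    psi (psi al4) = al4 ∧ psi (psi al5) = al5 := by
  refine ⟨?_, ?_, ?_, ?_, ?_, ?_⟩
  · rw [psi_al0, psi_al5]
  · rw [psi_al1, psi_al4]
  · simp only [psi_al2, map_add, map_nsmul, psi_al0, psi_al1, psi_al3, Kp]
    abel
  · simp only [psi_al3, map_neg, map_add, psi_al0, psi_al1, psi_al2, Kp]
    abel
  · rw [psi_al4, psi_al1]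
  · rw [psi_al5, psi_al0]
end

section
/- (Proposition) The square of φ decomposes into two conjugates of the q-Painlevé VI lattice action: φ² = (σ₅₄₃₂₁₀ ∘ w₂ ∘ ψ² ∘ w₂ ∘ σ₅₄₃₂₁₀) ∘ (w₂ ∘ ψ² ∘ w₂) as ℤ-linear maps L → L. -/
open scoped BigOperators

theorem LinearMap.toMatrix'_eq_transpose_of_apply_single {R m n : Type*} [CommSemiring R]
    [Fintype n] [DecidableEq n] (f : (n → R) →ₗ[R] m → R) (v : n → m → R)
    (hf : ∀ j, f (Pi.single j 1) = v j) :
    LinearMap.toMatrix' f = (Matrix.of v).transpose := by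
  ext i j
  rw [LinearMap.toMatrix'_apply, hf]
  rfl

def phiMatrix : Matrix (Fin 10) (Fin 10) ℤ :=
  (Matrix.of ![2 • H0 + H1 - E2 - E4 - E6 - E8, H0 + 2 • H1 - E2 - E4 - E6 - E8,
    H0 + H1 - E2 - E4 - E8, E5, H0 + H1 - E2 - E4 - E6, E7, H0 + H1 - E4 - E6 - E8, E1,
    H0 + H1 - E2 - E6 - E8, E3]).transpose

theorem toMatrix'_eq_phiMatrix (φ : L →ₗ[ℤ] L)
    (hφH0 : φ H0 = 2 • H0 + H1 - E2 - E4 - E6 - E8)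
    (hφH1 : φ H1 = H0 + 2 • H1 - E2 - E4 - E6 - E8)
    (hφE1 : φ E1 = H0 + H1 - E2 - E4 - E8)
    (hφE2 : φ E2 = E5)
    (hφE3 : φ E3 = H0 + H1 - E2 - E4 - E6)
    (hφE4 : φ E4 = E7)
    (hφE5 : φ E5 = H0 + H1 - E4 - E6 - E8)
    (hφE6 : φ E6 = E1)
    (hφE7 : φ E7 = H0 + H1 - E2 - E6 - E8)
    (hφE8 : φ E8 = E3) :
    LinearMap.toMatrix' φ = phiMatrix := by
  refine LinearMap.toMatrix'_eq_transpose_of_apply_single φ _ fun j => ?_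
  fin_cases j
  exacts [hφH0, hφH1, hφE1, hφE2, hφE3, hφE4, hφE5, hφE6, hφE7, hφE8]

theorem toMatrix'_conj_psi_sq_comp_eq_phiMatrix_mul_self :
    LinearMap.toMatrix' ((sig543210 ∘ₗ w2 ∘ₗ (psi ∘ₗ psi) ∘ₗ w2 ∘ₗ sig543210) ∘ₗ
      (w2 ∘ₗ (psi ∘ₗ psi) ∘ₗ w2)) = phiMatrix * phiMatrix := by
  decide +kernel

/-- `φ²` decomposes into two conjugates of the `q`-Painlevé VI lattice action:
`φ² = (σ₅₄₃₂₁₀ ∘ w₂ ∘ ψ² ∘ w₂ ∘ σ₅₄₃₂₁₀) ∘ (w₂ ∘ ψ² ∘ w₂)`. -/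
theorem stmt_18
    (φ : L →ₗ[ℤ] L)
    (hφH0 : φ H0 = 2 • H0 + H1 - E2 - E4 - E6 - E8)
    (hφH1 : φ H1 = H0 + 2 • H1 - E2 - E4 - E6 - E8)
    (hφE1 : φ E1 = H0 + H1 - E2 - E4 - E8)
    (hφE2 : φ E2 = E5)
    (hφE3 : φ E3 = H0 + H1 - E2 - E4 - E6)
    (hφE4 : φ E4 = E7)
    (hφE5 : φ E5 = H0 + H1 - E4 - E6 - E8)
    (hφE6 : φ E6 = E1)
    (hφE7 : φ E7 = H0 + H1 - E2 - E6 - E8)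
    (hφE8 : φ E8 = E3) :
    φ ∘ₗ φ =
      (sig543210 ∘ₗ w2 ∘ₗ (psi ∘ₗ psi) ∘ₗ w2 ∘ₗ sig543210) ∘ₗ
        (w2 ∘ₗ (psi ∘ₗ psi) ∘ₗ w2) := by
  have hΦ := toMatrix'_eq_phiMatrix φ hφH0 hφH1 hφE1 hφE2 hφE3 hφE4 hφE5 hφE6 hφE7 hφE8
  apply LinearMap.toMatrix'.injective
  rw [LinearMap.toMatrix'_comp, hΦ, toMatrix'_conj_psi_sq_comp_eq_phiMatrix_mul_self]
end
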